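/- Let γ > 0 and 0 < a < 1. Define S(u,v) = ∫_u^v e^{-1/z}·z/(1−z) dz, R(a,y) = (1/γ)·( log(y/(1−y)) − 2y − log(a/(1−a)) + 2a ), K(z) = (1/γ)·e^{1/z}·(2 − 2/z + 1/z²) (so K(1) = e/γ), and T(y) = R(a,y) − S(a,y)·(e/γ) for y ∈ [a,1). Then T(a) = 0 and for every y ∈ (a,1), T is twice differentiable at y with −γ y·T'(y) + γ y³(1−y)·T''(y) = −1. -/

import Mathlib

/-- Heterodyne scale density Q(z) = e^{-1/z}·z/(1−z). -/
noncomputable def Qhet (z : ℝ) : ℝ := Real.exp (-1 / z) * z / (1 - z)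

/-- Heterodyne scale integral S(u,v) = ∫_u^v Q(z) dz. -/
noncomputable def Shet (u v : ℝ) : ℝ := ∫ z in u..v, Qhet z

/-- Heterodyne R(u,v) = (1/γ)[log(z/(1−z)) − 2z]_u^v. -/
noncomputable def Rhet (γ u v : ℝ) : ℝ :=
  (1 / γ) * (Real.log (v / (1 - v)) - 2 * v - Real.log (u / (1 - u)) + 2 * u)

/-!
On `(0, 1)` the fundamental theorem of calculus gives `T' = R' - (e/γ) Q`, and the generator
`L f = -γ y f' + γ y³ (1 - y) f''` splits accordingly. `Q` is the scale density of the diffusion,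
`Q' / Q = 1 / (y² (1 - y)) = -2A/B²`, so `L` annihilates `S(a, ·)`; and the explicit `R` satisfies
`L R = -1` by a rational-function identity.
-/

open Real Set Filter Topology

lemma hasDerivAt_Qhet {z : ℝ} (hz0 : z ≠ 0) (hz1 : z ≠ 1) :
    HasDerivAt Qhet (Qhet z / (z ^ 2 * (1 - z))) z := by
  have h1z : 1 - z ≠ 0 := sub_ne_zero.mpr (Ne.symm hz1)
  have hexp := ((hasDerivAt_const z (-1 : ℝ)).fun_div (hasDerivAt_id' z) hz0).exp
  refine ((hexp.fun_mul (hasDerivAt_id' z)).fun_div ((hasDerivAt_id' z).const_sub 1)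
    h1z).congr_deriv ?_
  simp only [Qhet]
  field_simp
  ring

lemma continuousOn_Qhet : ContinuousOn Qhet (Ioo 0 1) := fun _ hz =>
  (hasDerivAt_Qhet hz.1.ne' hz.2.ne).continuousAt.continuousWithinAt

lemma hasDerivAt_Shet {u v : ℝ} (hu : u ∈ Ioo 0 1) (hv : v ∈ Ioo 0 1) :
    HasDerivAt (Shet u) (Qhet v) v :=
  intervalIntegral.integral_hasDerivAt_right
    (continuousOn_Qhet.mono (ordConnected_Ioo.uIcc_subset hu hv)).intervalIntegrable
    (continuousOn_Qhet.stronglyMeasurableAtFilter isOpen_Ioo v hv)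
    (continuousOn_Qhet.continuousAt (isOpen_Ioo.mem_nhds hv))

lemma hasDerivAt_Rhet (γ u : ℝ) {v : ℝ} (hv0 : v ≠ 0) (hv1 : v ≠ 1) :
    HasDerivAt (Rhet γ u) (1 / γ * (1 / (v * (1 - v)) - 2)) v := by
  have h1v : 1 - v ≠ 0 := sub_ne_zero.mpr (Ne.symm hv1)
  have hlog := ((hasDerivAt_id' v).fun_div ((hasDerivAt_id' v).const_sub 1) h1v).log
    (div_ne_zero hv0 h1v)
  refine (((hlog.sub ((hasDerivAt_id' v).const_mul 2)).sub_const _).add_const _).const_mul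
    (1 / γ) |>.congr_deriv ?_
  field_simp
  ring

lemma hasDerivAt_one_div_mul_one_sub {v : ℝ} (hv0 : v ≠ 0) (hv1 : v ≠ 1) :
    HasDerivAt (fun v => 1 / (v * (1 - v))) ((2 * v - 1) / (v * (1 - v)) ^ 2) v := by
  have h1v : 1 - v ≠ 0 := sub_ne_zero.mpr (Ne.symm hv1)
  refine ((hasDerivAt_const v (1 : ℝ)).fun_div
    ((hasDerivAt_id' v).fun_mul ((hasDerivAt_id' v).const_sub 1))
    (mul_ne_zero hv0 h1v)).congr_deriv ?_
  ring

section HittingTime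

variable (γ c : ℝ) {a y : ℝ}

lemma hasDerivAt_Rhet_sub_Shet_mul (ha : a ∈ Ioo 0 1) (hy : y ∈ Ioo 0 1) :
    HasDerivAt (fun v => Rhet γ a v - Shet a v * c)
      (1 / γ * (1 / (y * (1 - y)) - 2) - Qhet y * c) y :=
  (hasDerivAt_Rhet γ a hy.1.ne' hy.2.ne).sub ((hasDerivAt_Shet ha hy).mul_const c)

lemma hasDerivAt_deriv_Rhet_sub_Shet_mul (ha : a ∈ Ioo 0 1) (hy : y ∈ Ioo 0 1) :
    HasDerivAt (deriv fun v => Rhet γ a v - Shet a v * c)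
      (1 / γ * ((2 * y - 1) / (y * (1 - y)) ^ 2) - Qhet y / (y ^ 2 * (1 - y)) * c) y := by
  have hderiv : (deriv fun v => Rhet γ a v - Shet a v * c) =ᶠ[𝓝 y]
      fun v => 1 / γ * (1 / (v * (1 - v)) - 2) - Qhet v * c :=
    eventually_of_mem (isOpen_Ioo.mem_nhds hy) fun v hv =>
      (hasDerivAt_Rhet_sub_Shet_mul γ c ha hv).deriv
  refine HasDerivAt.congr_of_eventuallyEq ?_ hderiv
  exact (((hasDerivAt_one_div_mul_one_sub hy.1.ne' hy.2.ne).sub_const 2).const_mul (1 / γ)).sub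
    ((hasDerivAt_Qhet hy.1.ne' hy.2.ne).mul_const c)

lemma het_generator_hitting_time (hγ : γ ≠ 0) (hy0 : y ≠ 0) (hy1 : y ≠ 1) :
    -γ * y * (1 / γ * (1 / (y * (1 - y)) - 2) - Qhet y * c) +
      γ * y ^ 3 * (1 - y) *
        (1 / γ * ((2 * y - 1) / (y * (1 - y)) ^ 2) - Qhet y / (y ^ 2 * (1 - y)) * c) = -1 := by
  have h1y : 1 - y ≠ 0 := sub_ne_zero.mpr (Ne.symm hy1)
  field_simp
  ring

end HittingTime

/-- The mean first hitting time of the level a under heterodyne detection,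
T(y) = R(a,y) − S(a,y)·(e/γ) (note K(1) = e/γ), satisfies T(a) = 0 and solves
−γy T'(y) + γy³(1−y) T''(y) = −1 on (a,1). -/
theorem het_mean_hitting_time (γ a : ℝ) (hγ : 0 < γ) (ha0 : 0 < a)
    (ha1 : a < 1) :
    let T : ℝ → ℝ := fun y => Rhet γ a y - Shet a y * (Real.exp 1 / γ)
    T a = 0 ∧
    ∀ y ∈ Set.Ioo a 1, ∃ t' t'' : ℝ,
      HasDerivAt T t' y ∧ HasDerivAt (deriv T) t'' y ∧
      -γ * y * t' + γ * y ^ 3 * (1 - y) * t'' = -1 := by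
  intro T
  refine ⟨by simp [T, Rhet, Shet], fun y hy => ?_⟩
  have ha : a ∈ Ioo 0 1 := ⟨ha0, ha1⟩
  have hy' : y ∈ Ioo 0 1 := ⟨ha0.trans hy.1, hy.2⟩
  exact ⟨_, _, hasDerivAt_Rhet_sub_Shet_mul γ _ ha hy',
    hasDerivAt_deriv_Rhet_sub_Shet_mul γ _ ha hy',
    het_generator_hitting_time γ _ hγ.ne' hy'.1.ne' hy'.2.ne⟩
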